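/- For every τ ∈ ℂ that is not a nonnegative integer and every x ∈ ℂ, the Hermite function has the convergent power series representation H_τ(x) = (1/(2Γ(−τ))) · Σ_{m=0}^{∞} (−1)^m · (Γ((m−τ)/2)/m!) · (2x)^m. -/

import Mathlib

open Complex MeasureTheory Filter Topology

/-- Pochhammer symbol `(a)_m = a (a+1) ⋯ (a+m-1)` for complex `a`. -/
noncomputable def cPoch (a : ℂ) (m : ℕ) : ℂ := ∏ k ∈ Finset.range m, (a + k)

/-- Confluent hypergeometric function `₁F₁(a, b, z) = Σ (a)_m / (b)_m · z^m / m!`. -/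
noncomputable def oneF1 (a b z : ℂ) : ℂ :=
  ∑' m : ℕ, (cPoch a m / cPoch b m) * z ^ m / (Nat.factorial m : ℂ)

/-- The Hermite function `H_τ` of complex degree `τ`. -/
noncomputable def hermiteFn (τ x : ℂ) : ℂ :=
  2 ^ τ * (Complex.Gamma (1 / 2) / Complex.Gamma ((1 - τ) / 2)) *
      oneF1 (-τ / 2) (1 / 2) (x ^ 2) +
    2 ^ τ * x * (Complex.Gamma (-(1 / 2)) / Complex.Gamma (-τ / 2)) *
      oneF1 ((1 - τ) / 2) (3 / 2) (x ^ 2)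

/-- Moments of the generalized Hermite linear functional `𝒢_H(τ)`:
`m_{2k}(τ) = (τ+1)_{2k} / (k! 2^{2k})` and `m_{2k+1}(τ) = 0`. -/
noncomputable def genHermiteMoment (τ : ℂ) (n : ℕ) : ℂ :=
  if n % 2 = 0 then cPoch (τ + 1) n / (((n / 2).factorial : ℂ) * 2 ^ n) else 0

/-! Split the series into its even and odd terms. Since `Γ(c + k) = (c)_k Γ(c)`,
`(2k)! = k! 4^k (1/2)_k` and `(2k+1)! = k! 4^k (3/2)_k`, the even part is
`Γ(-τ/2) ₁F₁(-τ/2; 1/2; x²)` and the odd part is `-2x Γ((1-τ)/2) ₁F₁((1-τ)/2; 3/2; x²)`; both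
series converge everywhere by the ratio test. Legendre's duplication formula
`Γ(-τ/2) Γ((1-τ)/2) = 2^(τ+1) √π Γ(-τ)` turns these prefactors into those of `H_τ`. -/

lemma cPoch_succ (a : ℂ) (n : ℕ) : cPoch a (n + 1) = cPoch a n * (a + n) :=
  Finset.prod_range_succ _ _

lemma cPoch_eq_ascPochhammer_eval (a : ℂ) (n : ℕ) : cPoch a n = (ascPochhammer ℂ n).eval a := by
  induction n with
  | zero => simp [cPoch]
  | succ n ih => rw [cPoch_succ, ascPochhammer_succ_eval, ih]

lemma Gamma_add_nat_eq_cPoch_mul {a : ℂ} (ha : ∀ k : ℕ, a ≠ -k) (n : ℕ) :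
    Gamma (a + n) = cPoch a n * Gamma a := by
  rw [cPoch_eq_ascPochhammer_eval, ← Gamma_add_nat_div_Gamma_eq a ha,
    div_mul_cancel₀ _ (Gamma_ne_zero ha)]

lemma factorial_two_mul_eq_cPoch (k : ℕ) :
    ((2 * k).factorial : ℂ) = k.factorial * 4 ^ k * cPoch (1 / 2) k := by
  induction k with
  | zero => simp [cPoch]
  | succ k ih =>
    rw [show 2 * (k + 1) = 2 * k + 1 + 1 by ring, Nat.factorial_succ, Nat.factorial_succ,
      cPoch_succ, Nat.factorial_succ]
    push_cast
    rw [ih]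
    ring

lemma factorial_two_mul_add_one_eq_cPoch (k : ℕ) :
    ((2 * k + 1).factorial : ℂ) = k.factorial * 4 ^ k * cPoch (3 / 2) k := by
  induction k with
  | zero => simp [cPoch]
  | succ k ih =>
    rw [show 2 * (k + 1) + 1 = 2 * k + 1 + 1 + 1 by ring, Nat.factorial_succ (2 * k + 1 + 1),
      Nat.factorial_succ (2 * k + 1), Nat.cast_mul, Nat.cast_mul, ih, cPoch_succ,
      Nat.factorial_succ k]
    push_cast
    ring

theorem summable_of_succ_eq_smul_of_tendsto_zero {𝕜 E : Type*} [NormedField 𝕜]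
    [NormedAddCommGroup E] [NormedSpace 𝕜 E] [CompleteSpace E] {f : ℕ → E} {c : ℕ → 𝕜}
    (hc : Tendsto c atTop (𝓝 0)) (hf : ∀ n, f (n + 1) = c n • f n) : Summable f := by
  refine summable_of_ratio_norm_eventually_le one_half_lt_one ?_
  filter_upwards [(tendsto_zero_iff_norm_tendsto_zero.1 hc).eventually_le_const one_half_pos]
    with n hn
  rw [hf, norm_smul]
  exact mul_le_mul_of_nonneg_right hn (norm_nonneg _)

lemma tendsto_add_natCast_div_add_natCast (a b : ℂ) :
    Tendsto (fun n : ℕ => (a + n) / (b + n)) atTop (𝓝 1) := by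
  have h := ((tendsto_const_div_atTop_nhds_zero_nat a).const_add 1).div
    ((tendsto_const_div_atTop_nhds_zero_nat b).const_add 1) (by norm_num)
  rw [add_zero, div_one] at h
  refine h.congr' ((eventually_ne_atTop 0).mono fun n hn => ?_)
  have hn : (n : ℂ) ≠ 0 := Nat.cast_ne_zero.2 hn
  show (1 + a / n) / (1 + b / n) = (a + n) / (b + n)
  rw [one_add_div hn, one_add_div hn, div_div_div_cancel_right₀ hn, add_comm a, add_comm b]

noncomputable def oneF1Term (a b z : ℂ) (m : ℕ) : ℂ :=
  cPoch a m / cPoch b m * z ^ m / (m.factorial : ℂ)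

lemma oneF1_eq_tsum_oneF1Term (a b z : ℂ) : oneF1 a b z = ∑' m, oneF1Term a b z m := rfl

-- Also true when `b + n = 0`: both sides are then `0`, as `x / 0 = 0`.
lemma oneF1Term_succ (a b z : ℂ) (n : ℕ) :
    oneF1Term a b z (n + 1) = (a + n) / (b + n) * (z / (n + 1)) * oneF1Term a b z n := by
  simp only [oneF1Term, cPoch_succ, Nat.factorial_succ, pow_succ, Nat.cast_mul, Nat.cast_succ,
    div_eq_mul_inv, mul_inv]
  ring

lemma summable_oneF1Term (a b z : ℂ) : Summable (oneF1Term a b z) := by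
  refine summable_of_succ_eq_smul_of_tendsto_zero ?_ fun n => by rw [oneF1Term_succ, smul_eq_mul]
  have hz : Tendsto (fun n : ℕ => z / ((n : ℂ) + 1)) atTop (𝓝 0) := by
    simpa [Function.comp_def] using
      (tendsto_const_div_atTop_nhds_zero_nat z).comp (tendsto_add_atTop_nat 1)
  simpa using (tendsto_add_natCast_div_add_natCast a b).mul hz

noncomputable def hermiteSeriesTerm (τ x : ℂ) (m : ℕ) : ℂ :=
  (-1 : ℂ) ^ m * (Gamma (((m : ℂ) - τ) / 2) / (m.factorial : ℂ)) * (2 * x) ^ m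

lemma hermiteSeriesTerm_two_mul {τ : ℂ} (hτ : ∀ j : ℕ, τ ≠ 2 * j) (x : ℂ) (k : ℕ) :
    hermiteSeriesTerm τ x (2 * k) = Gamma (-τ / 2) * oneF1Term (-τ / 2) (1 / 2) (x ^ 2) k := by
  have hΓ : Gamma ((((2 * k : ℕ) : ℂ) - τ) / 2) = cPoch (-τ / 2) k * Gamma (-τ / 2) := by
    rw [← Gamma_add_nat_eq_cPoch_mul fun j h => hτ j (by linear_combination -2 * h)]
    push_cast
    ring_nf
  rw [hermiteSeriesTerm, hΓ, factorial_two_mul_eq_cPoch, oneF1Term, pow_mul, pow_mul, mul_pow]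
  field_simp
  ring

lemma hermiteSeriesTerm_two_mul_add_one {τ : ℂ} (hτ : ∀ j : ℕ, τ ≠ 2 * j + 1) (x : ℂ) (k : ℕ) :
    hermiteSeriesTerm τ x (2 * k + 1) =
      -(2 * x * Gamma ((1 - τ) / 2)) * oneF1Term ((1 - τ) / 2) (3 / 2) (x ^ 2) k := by
  have hΓ : Gamma ((((2 * k + 1 : ℕ) : ℂ) - τ) / 2) =
      cPoch ((1 - τ) / 2) k * Gamma ((1 - τ) / 2) := by
    rw [← Gamma_add_nat_eq_cPoch_mul fun j h => hτ j (by linear_combination -2 * h)]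
    push_cast
    ring_nf
  rw [hermiteSeriesTerm, hΓ, factorial_two_mul_add_one_eq_cPoch, oneF1Term, pow_succ, pow_succ,
    pow_mul, pow_mul, mul_pow]
  field_simp
  ring

lemma Gamma_neg_div_two_mul_Gamma_one_sub_div_two (τ : ℂ) :
    Gamma (-τ / 2) * Gamma ((1 - τ) / 2) = 2 ^ τ * 2 * Gamma (1 / 2) * Gamma (-τ) := by
  have h := Gamma_mul_Gamma_add_half (-τ / 2)
  rw [show -τ / 2 + 1 / 2 = (1 - τ) / 2 by ring, show 2 * (-τ / 2) = -τ by ring,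
    show (1 : ℂ) - -τ = τ + 1 by ring, cpow_add _ _ two_ne_zero, cpow_one] at h
  rw [h, ← Real.Gamma_one_half_eq, ← Gamma_ofReal]
  push_cast
  ring

lemma hermiteFn_eq_inv_two_Gamma_mul {τ : ℂ} (hτ : ∀ n : ℕ, τ ≠ n) (x : ℂ) :
    hermiteFn τ x = 1 / (2 * Gamma (-τ)) * (Gamma (-τ / 2) * oneF1 (-τ / 2) (1 / 2) (x ^ 2) +
      -(2 * x * Gamma ((1 - τ) / 2)) * oneF1 ((1 - τ) / 2) (3 / 2) (x ^ 2)) := by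
  have Gamma_neg_half : Gamma (-(1 / 2)) = -2 * Gamma (1 / 2) := by
    have h := Gamma_add_one (-(1 / 2) : ℂ) (by norm_num)
    rw [show (-(1 / 2) : ℂ) + 1 = 1 / 2 by ring] at h
    linear_combination 2 * h
  have hdup := Gamma_neg_div_two_mul_Gamma_one_sub_div_two τ
  have h1 : Gamma ((1 - τ) / 2) ≠ 0 := Gamma_ne_zero fun m h =>
    hτ (2 * m + 1) (by push_cast; linear_combination -2 * h)
  have h2 : Gamma (-τ / 2) ≠ 0 := Gamma_ne_zero fun m h =>
    hτ (2 * m) (by push_cast; linear_combination -2 * h)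
  have h3 : Gamma (-τ) ≠ 0 := Gamma_ne_zero fun m h => hτ m (by linear_combination -h)
  have c1 : 2 ^ τ * (Gamma (1 / 2) / Gamma ((1 - τ) / 2)) =
      1 / (2 * Gamma (-τ)) * Gamma (-τ / 2) := by
    simp only [neg_div] at hdup h2 ⊢
    field_simp
    linear_combination -hdup
  have c2 : 2 ^ τ * (Gamma (-(1 / 2)) / Gamma (-τ / 2)) =
      1 / (2 * Gamma (-τ)) * -(2 * Gamma ((1 - τ) / 2)) := by
    rw [Gamma_neg_half]
    simp only [neg_div] at hdup h2 ⊢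
    field_simp
    linear_combination hdup
  rw [hermiteFn]
  linear_combination
    oneF1 (-τ / 2) (1 / 2) (x ^ 2) * c1 + x * oneF1 ((1 - τ) / 2) (3 / 2) (x ^ 2) * c2

theorem hermiteFn_power_series (τ : ℂ) (hτ : ∀ n : ℕ, τ ≠ (n : ℂ)) (x : ℂ) :
    Summable (fun m : ℕ =>
      (-1 : ℂ) ^ m * (Complex.Gamma (((m : ℂ) - τ) / 2) / (Nat.factorial m : ℂ)) * (2 * x) ^ m) ∧
    hermiteFn τ x = (1 / (2 * Complex.Gamma (-τ))) *
      ∑' m : ℕ,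
        (-1 : ℂ) ^ m * (Complex.Gamma (((m : ℂ) - τ) / 2) / (Nat.factorial m : ℂ)) * (2 * x) ^ m := by
  show Summable (hermiteSeriesTerm τ x) ∧ _ = _ * ∑' m, hermiteSeriesTerm τ x m
  have heven := hermiteSeriesTerm_two_mul (fun j => by exact_mod_cast hτ (2 * j)) x
  have hodd := hermiteSeriesTerm_two_mul_add_one (fun j => by exact_mod_cast hτ (2 * j + 1)) x
  have sumEven : Summable fun k => hermiteSeriesTerm τ x (2 * k) :=
    ((summable_oneF1Term _ _ _).mul_left _).congr fun k => (heven k).symm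
  have sumOdd : Summable fun k => hermiteSeriesTerm τ x (2 * k + 1) :=
    ((summable_oneF1Term _ _ _).mul_left _).congr fun k => (hodd k).symm
  refine ⟨sumEven.even_add_odd sumOdd, ?_⟩
  rw [← tsum_even_add_odd sumEven sumOdd, tsum_congr heven, tsum_congr hodd, tsum_mul_left,
    tsum_mul_left, hermiteFn_eq_inv_two_Gamma_mul hτ,
    oneF1_eq_tsum_oneF1Term, oneF1_eq_tsum_oneF1Term]
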